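/- arXiv:2306.06922 — 2 statements merged into one kernel-verified Lean document; each statement's English description precedes it below -/
import Mathlib

section
/- The subdifferential of a lower semicontinuous convex function φ : ℝⁿ → (-∞, +∞] with Int(Dom φ) ≠ ∅ is maximal monotone: if (x₁, y₁) ∈ ℝⁿ × ℝⁿ satisfies ⟨x₁ - x₂, y₁ - y₂⟩ ≥ 0 for all (x₂, y₂) with y₂ ∈ ∂φ(x₂), then y₁ ∈ ∂φ(x₁). -/
/-!
Minty's argument. For `v = x₁ + y₁`, the function `φ + ‖· - v‖² / 2` is lower semicontinuous and
coercive (by Hahn–Banach a proper lsc convex `φ` has a continuous affine minorant), so it attains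
its minimum at some `x₀`; comparing with the values on the segment from `x₀` to any `z` gives
`v - x₀ ∈ ∂φ(x₀)`. Monotonicity tested against this pair reads `-‖x₁ - x₀‖² ≥ 0`, so `x₀ = x₁`
and `y₁ = v - x₁ ∈ ∂φ(x₁)`. If `φ` takes the value `⊥`, or is identically `⊤`, then `∂φ` is
everything at some point and the same conclusion holds.
-/

open Set Filter Topology

theorem LowerSemicontinuous.exists_forall_le_of_isCompact {α β : Type*} [TopologicalSpace α]
    [LinearOrder β] {f : α → β} (hf : LowerSemicontinuous f) {u : α}
    (hu : IsCompact {x | f x ≤ f u}) : ∃ x₀, ∀ x, f x₀ ≤ f x := by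
  obtain ⟨x₀, hx₀u, hx₀⟩ := (hf.lowerSemicontinuousOn _).exists_isMinOn ⟨u, le_refl (f u)⟩ hu
  refine ⟨x₀, fun x => ?_⟩
  rcases le_total (f x) (f u) with hx | hx
  · exact hx₀ hx
  · exact (hx₀u : f x₀ ≤ f u).trans hx

theorem LowerSemicontinuous.isClosed_coe_epigraph {α : Type*} [TopologicalSpace α]
    {φ : α → EReal} (hφ : LowerSemicontinuous φ) : IsClosed {p : α × ℝ | φ p.1 ≤ p.2} :=
  hφ.isClosed_epigraph.preimage (continuous_id.prodMap continuous_coe_real_ereal)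

section NormedSpace

variable {E : Type*}

-- Mathlib's `ConvexOn` does not apply here: `EReal` is not an `ℝ`-module.
def ConvexEReal [AddCommMonoid E] [Module ℝ E] (φ : E → EReal) : Prop :=
  ∀ x y : E, ∀ t : ℝ, 0 ≤ t → t ≤ 1 →
    φ (t • x + (1 - t) • y) ≤ (t : EReal) * φ x + ((1 - t : ℝ) : EReal) * φ y

theorem ConvexEReal.convex_coe_epigraph [AddCommMonoid E] [Module ℝ E] {φ : E → EReal}
    (hφ : ConvexEReal φ) : Convex ℝ {p : E × ℝ | φ p.1 ≤ p.2} := by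
  rintro p (hp : φ p.1 ≤ p.2) q (hq : φ q.1 ≤ q.2) a b ha hb hab
  obtain rfl : b = 1 - a := by linarith
  calc φ (a • p.1 + (1 - a) • q.1)
      ≤ (a : EReal) * φ p.1 + ((1 - a : ℝ) : EReal) * φ q.1 := hφ _ _ a ha (by linarith)
    _ ≤ (a : EReal) * p.2 + ((1 - a : ℝ) : EReal) * q.2 := by gcongr
    _ = ((a • p + (1 - a) • q).2 : ℝ) := by simp

theorem ConvexEReal.exists_affine_le [NormedAddCommGroup E] [NormedSpace ℝ E] {φ : E → EReal}
    (hconv : ConvexEReal φ) (hlsc : LowerSemicontinuous φ) (hbot : ∀ x, φ x ≠ ⊥) {u : E}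
    (hu : φ u ≠ ⊤) : ∃ (g : E →L[ℝ] ℝ) (b : ℝ), ∀ x, ((g x + b : ℝ) : EReal) ≤ φ x := by
  set epi := {p : E × ℝ | φ p.1 ≤ p.2}
  have real_of_ne_top : ∀ x, φ x ≠ ⊤ → ∃ r : ℝ, φ x = r := fun x hx =>
    ⟨_, (EReal.coe_toReal hx (hbot x)).symm⟩
  obtain ⟨r, hr⟩ := real_of_ne_top u hu
  have hu_epi : (u, r - 1) ∉ epi := by
    simp only [epi, mem_ofPred_eq, hr, EReal.coe_le_coe_iff]
    linarith
  obtain ⟨f, c, hfc, hsep⟩ :=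
    geometric_hahn_banach_point_closed hconv.convex_coe_epigraph hlsc.isClosed_coe_epigraph hu_epi
  set β := f (0, 1)
  have hsplit : ∀ x t, f (x, t) = f (x, 0) + t * β := fun x t => by
    rw [← smul_eq_mul, ← map_smul, ← map_add]
    simp
  have hβ : 0 < β := by
    have := hsep (u, r) hr.le
    rw [hsplit] at this hfc
    linarith
  refine ⟨-β⁻¹ • f.comp (.inl ℝ E ℝ), c / β, fun x => ?_⟩
  rcases eq_or_ne (φ x) ⊤ with hx | hx
  · simp [hx]
  obtain ⟨s, hs⟩ := real_of_ne_top x hx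
  have hcx := hsep (x, s) hs.le
  rw [hsplit] at hcx
  rw [hs, EReal.coe_le_coe_iff]
  calc (-β⁻¹ • f.comp (.inl ℝ E ℝ)) x + c / β = (c - f (x, 0)) / β := by
        simp only [smul_apply, ContinuousLinearMap.comp_apply,
          ContinuousLinearMap.inl_apply, smul_eq_mul]
        field_simp
        ring
    _ ≤ s := by rw [div_le_iff₀ hβ]; linarith

theorem isBounded_setOf_affine_add_norm_sub_sq_le [NormedAddCommGroup E] [NormedSpace ℝ E]
    (g : E →L[ℝ] ℝ) (b M : ℝ) (v : E) :
    Bornology.IsBounded {x | g x + b + ‖x - v‖ ^ 2 / 2 ≤ M} := by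
  refine (Metric.isBounded_closedBall (x := v) (r := 2 * ‖g‖ + 2 * |M - b - g v| + 1)).subset
    fun x (hx : g x + b + ‖x - v‖ ^ 2 / 2 ≤ M) => ?_
  rw [Metric.mem_closedBall, dist_eq_norm]
  have hg : -(‖g‖ * ‖x - v‖) ≤ g x - g v := by
    rw [← map_sub]
    exact neg_le_of_abs_le (g.le_opNorm (x - v))
  nlinarith [norm_nonneg (x - v), norm_nonneg g, le_abs_self (M - b - g v), abs_nonneg (M - b - g v)]

end NormedSpace

section InnerProductSpace

variable {E : Type*} [NormedAddCommGroup E] [InnerProductSpace ℝ E]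

def subdifferential (φ : E → EReal) (x : E) : Set E :=
  {y | ∀ z, ((inner ℝ y (z - x) : ℝ) : EReal) + φ x ≤ φ z}

theorem mem_subdifferential_of_eq_bot {φ : E → EReal} {x : E} (hx : φ x = ⊥) (y : E) :
    y ∈ subdifferential φ x := fun z => by simp [hx]

variable {φ : E → EReal}

theorem ConvexEReal.exists_forall_le_add_norm_sub_sq [ProperSpace E] (hconv : ConvexEReal φ)
    (hlsc : LowerSemicontinuous φ) (hbot : ∀ x, φ x ≠ ⊥) {u : E} (hu : φ u ≠ ⊤) (v : E) :
    ∃ x₀, ∀ x, φ x₀ + ((‖x₀ - v‖ ^ 2 / 2 : ℝ) : EReal) ≤ φ x + ((‖x - v‖ ^ 2 / 2 : ℝ) : EReal) := by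
  set ψ : E → EReal := fun x => φ x + ((‖x - v‖ ^ 2 / 2 : ℝ) : EReal)
  have hψ : LowerSemicontinuous ψ :=
    hlsc.add' (continuous_coe_real_ereal.comp (by fun_prop)).lowerSemicontinuous
      fun x => EReal.continuousAt_add (.inr (EReal.coe_ne_bot _)) (.inr (EReal.coe_ne_top _))
  obtain ⟨g, b, hgb⟩ := hconv.exists_affine_le hlsc hbot hu
  obtain ⟨M, hM⟩ : ∃ M : ℝ, ψ u = M := ⟨_, (EReal.coe_toReal (EReal.add_lt_top hu
    (EReal.coe_ne_top _)).ne (EReal.add_ne_bot_iff.mpr ⟨hbot u, EReal.coe_ne_bot _⟩)).symm⟩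
  have hsub : {x | ψ x ≤ ψ u} ⊆ {x | g x + b + ‖x - v‖ ^ 2 / 2 ≤ M} := fun x (hx : ψ x ≤ ψ u) => by
    exact_mod_cast (add_le_add_left (hgb x) _).trans (hx.trans hM.le)
  exact hψ.exists_forall_le_of_isCompact (Metric.isCompact_of_isClosed_isBounded
    (hψ.isClosed_preimage _) ((isBounded_setOf_affine_add_norm_sub_sq_le g b M v).subset hsub))

theorem ConvexEReal.sub_mem_subdifferential_of_forall_le (hconv : ConvexEReal φ)
    (hbot : ∀ x, φ x ≠ ⊥) {v x₀ : E} (hx₀ : φ x₀ ≠ ⊤)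
    (hmin : ∀ x, φ x₀ + ((‖x₀ - v‖ ^ 2 / 2 : ℝ) : EReal) ≤ φ x + ((‖x - v‖ ^ 2 / 2 : ℝ) : EReal)) :
    v - x₀ ∈ subdifferential φ x₀ := by
  intro z
  rcases eq_or_ne (φ z) ⊤ with hz | hz
  · simp [hz]
  obtain ⟨r₀, hr₀⟩ : ∃ r : ℝ, φ x₀ = r := ⟨_, (EReal.coe_toReal hx₀ (hbot x₀)).symm⟩
  obtain ⟨rz, hrz⟩ : ∃ r : ℝ, φ z = r := ⟨_, (EReal.coe_toReal hz (hbot z)).symm⟩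
  set d := z - x₀
  have hseg : ∀ t : ℝ, 0 < t → t ≤ 1 →
      inner ℝ (v - x₀) d + r₀ ≤ rz + t * (‖d‖ ^ 2 / 2) := by
    intro t ht₀ ht₁
    have hle := (hmin _).trans (add_le_add_left (hconv z x₀ t ht₀.le ht₁) _)
    rw [hr₀, hrz] at hle
    have hle_real : r₀ + ‖x₀ - v‖ ^ 2 / 2 ≤
        t * rz + (1 - t) * r₀ + ‖t • z + (1 - t) • x₀ - v‖ ^ 2 / 2 := by exact_mod_cast hle
    have hpt : t • z + (1 - t) • x₀ - v = (x₀ - v) + t • d := by module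
    rw [hpt, norm_add_sq_real, norm_smul, inner_smul_right, Real.norm_of_nonneg ht₀.le] at hle_real
    have hinner : inner ℝ (v - x₀) d = -inner ℝ (x₀ - v) d := by
      rw [← inner_neg_left, neg_sub]
    refine le_of_mul_le_mul_left ?_ ht₀
    rw [hinner]
    linarith
  rw [hr₀, hrz]
  norm_cast
  have hlim : Tendsto (fun t : ℝ => rz + t * (‖d‖ ^ 2 / 2)) (𝓝[>] 0) (𝓝 rz) := by
    have hcont : Continuous fun t : ℝ => rz + t * (‖d‖ ^ 2 / 2) := by fun_prop
    simpa using (hcont.tendsto 0).mono_left nhdsWithin_le_nhds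
  exact ge_of_tendsto hlim (eventually_of_mem (Ioc_mem_nhdsGT one_pos) fun t ht => hseg t ht.1 ht.2)

theorem ConvexEReal.exists_sub_mem_subdifferential [ProperSpace E] (hconv : ConvexEReal φ)
    (hlsc : LowerSemicontinuous φ) (v : E) : ∃ x₀, v - x₀ ∈ subdifferential φ x₀ := by
  by_cases hbot : ∃ p, φ p = ⊥
  · obtain ⟨p, hp⟩ := hbot
    exact ⟨p, mem_subdifferential_of_eq_bot hp _⟩
  push Not at hbot
  by_cases htop : ∀ x, φ x = ⊤
  · exact ⟨v, fun z => by simp [htop z]⟩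
  push Not at htop
  obtain ⟨u, hu⟩ := htop
  obtain ⟨x₀, hmin⟩ := hconv.exists_forall_le_add_norm_sub_sq hlsc hbot hu v
  refine ⟨x₀, hconv.sub_mem_subdifferential_of_forall_le hbot (fun hx₀ => ?_) hmin⟩
  have := (hmin u).trans_lt (EReal.add_lt_top hu (EReal.coe_ne_top _))
  simp [hx₀] at this

end InnerProductSpace

theorem subdifferential_maximal_monotone_general (n : ℕ) (φ : EuclideanSpace ℝ (Fin n) → EReal)
    (hconv : ∀ x y : EuclideanSpace ℝ (Fin n), ∀ t : ℝ, 0 ≤ t → t ≤ 1 →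
      φ (t • x + (1 - t) • y) ≤ (t : EReal) * φ x + ((1 - t : ℝ) : EReal) * φ y)
    (hlsc : LowerSemicontinuous φ)
    (x₁ y₁ : EuclideanSpace ℝ (Fin n))
    (hmax : ∀ x₂ y₂ : EuclideanSpace ℝ (Fin n),
      (∀ z, ((inner ℝ y₂ (z - x₂) : ℝ) : EReal) + φ x₂ ≤ φ z) →
      0 ≤ (inner ℝ (x₁ - x₂) (y₁ - y₂) : ℝ)) :
    ∀ z, ((inner ℝ y₁ (z - x₁) : ℝ) : EReal) + φ x₁ ≤ φ z := by
  obtain ⟨x₀, hx₀⟩ := ConvexEReal.exists_sub_mem_subdifferential hconv hlsc (x₁ + y₁)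
  have hmono := hmax x₀ _ hx₀
  rw [show y₁ - (x₁ + y₁ - x₀) = -(x₁ - x₀) by abel, inner_neg_right, neg_nonneg] at hmono
  obtain rfl : x₁ = x₀ := sub_eq_zero.mp (real_inner_self_nonpos.mp hmono)
  rwa [add_sub_cancel_left] at hx₀

/-- The subdifferential of a lower semicontinuous convex function `φ : ℝⁿ → (-∞, +∞]`
with `Int(Dom φ) ≠ ∅` is maximal monotone: if `(x₁, y₁)` satisfies
`⟨x₁ - x₂, y₁ - y₂⟩ ≥ 0` for all `(x₂, y₂)` with `y₂ ∈ ∂φ(x₂)`, then `y₁ ∈ ∂φ(x₁)`. -/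
theorem subdifferential_maximal_monotone (n : ℕ) (φ : EuclideanSpace ℝ (Fin n) → EReal)
    (hconv : ∀ x y : EuclideanSpace ℝ (Fin n), ∀ t : ℝ, 0 ≤ t → t ≤ 1 →
      φ (t • x + (1 - t) • y) ≤ (t : EReal) * φ x + ((1 - t : ℝ) : EReal) * φ y)
    (hlsc : LowerSemicontinuous φ)
    (hdom : (interior {x | φ x < ⊤}).Nonempty)
    (x₁ y₁ : EuclideanSpace ℝ (Fin n))
    (hmax : ∀ x₂ y₂ : EuclideanSpace ℝ (Fin n),
      (∀ z, ((inner ℝ y₂ (z - x₂) : ℝ) : EReal) + φ x₂ ≤ φ z) →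
      0 ≤ (inner ℝ (x₁ - x₂) (y₁ - y₂) : ℝ)) :
    ∀ z, ((inner ℝ y₁ (z - x₁) : ℝ) : EReal) + φ x₁ ≤ φ z :=
  subdifferential_maximal_monotone_general n φ hconv hlsc x₁ y₁ hmax
end

section
/- If A : ℝⁿ → 2^{ℝⁿ} is a maximal monotone operator, then the closure of its domain D(A) = {x : A(x) ≠ ∅} is a convex subset of ℝⁿ. -/
/-!
For `l > 0` the Cayley transform `x + l • y ↦ x - l • y` of the graph of a monotone `A` is
nonexpansive. By the one-point Kirszbraun extension it extends to any `z`, and maximality turns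
the extended pair back into a point of the graph: `I + l • A` is onto (Minty). Kirszbraun's step
minimises `w ↦ maxᵢ (‖w - yᵢ‖² - ‖z - xᵢ‖²)`; the minimiser lies in the convex hull of the active
`yᵢ`, and expanding `‖∑ μᵢ • (w - yᵢ)‖² = 0` against `‖∑ μᵢ • (z - xᵢ)‖² ≥ 0` shows the minimum
is `≤ 0`. Finally, if `z = s • a + t • b` with `a, b ∈ D(A)` and `x + l • y = z` with `y ∈ A x`,
monotonicity gives `‖z - x‖² ≤ l * C * (M + ‖z - x‖)`, so `x → z` as `l → 0`.
-/

open Set Filter Topology RealInnerProductSpace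

variable {E : Type*} [NormedAddCommGroup E] [InnerProductSpace ℝ E]

theorem norm_add_smul_sub_sq (w v q : E) (t : ℝ) :
    ‖w + t • v - q‖ ^ 2 = ‖w - q‖ ^ 2 + t * (2 * ⟪w - q, v⟫ + t * ‖v‖ ^ 2) := by
  rw [add_sub_right_comm, norm_add_sq_real, real_inner_smul_right, norm_smul,
    Real.norm_eq_abs, mul_pow, sq_abs]
  ring

theorem real_inner_add_sub_eq_norm_sq_sub_norm_sq (u v : E) :
    ⟪u + v, u - v⟫ = ‖u‖ ^ 2 - ‖v‖ ^ 2 := by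
  rw [inner_add_left, inner_sub_right, inner_sub_right, real_inner_comm u v,
    real_inner_self_eq_norm_sq, real_inner_self_eq_norm_sq]
  ring

theorem exists_forall_inner_sub_neg [CompleteSpace E] {t : Set E} (ht : Convex ℝ t)
    (htc : IsClosed t) {w : E} (hw : w ∉ t) : ∃ v, ∀ q ∈ t, ⟪w - q, v⟫ < 0 := by
  obtain ⟨f, u, hfw, hf⟩ := geometric_hahn_banach_point_closed ht htc hw
  refine ⟨(InnerProductSpace.toDual ℝ E).symm f, fun q hq => ?_⟩
  rw [real_inner_comm, InnerProductSpace.toDual_symm_apply, map_sub]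
  linarith [hf q hq]

theorem norm_sum_smul_sq {ι : Type*} (s : Finset ι) (μ : ι → ℝ) (u : ι → E) :
    ‖∑ i ∈ s, μ i • u i‖ ^ 2 = ∑ i ∈ s, ∑ j ∈ s, μ i * μ j * ⟪u i, u j⟫ := by
  simp only [← real_inner_self_eq_norm_sq, sum_inner, inner_sum, real_inner_smul_left,
    real_inner_smul_right]
  exact Finset.sum_congr rfl fun i _ => Finset.sum_congr rfl fun j _ => by
    rw [real_inner_comm]; ring

theorem le_add_sqrt_of_sq_le {r c m : ℝ} (hc : 0 ≤ c) (h : r ^ 2 ≤ c * (m + r)) :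
    r ≤ c + √(c * m) := by
  rcases le_or_gt r c with hrc | hrc
  · linarith [Real.sqrt_nonneg (c * m)]
  · have : (r - c) ^ 2 ≤ c * m := by nlinarith
    linarith [Real.le_sqrt_of_sq_le this]

theorem add_inner_le_inner_of_norm_sub_le {w z y₁ y₂ x₁ x₂ : E} {c : ℝ} (h : ‖y₁ - y₂‖ ≤ ‖x₁ - x₂‖)
    (h₁ : ‖w - y₁‖ ^ 2 = c + ‖z - x₁‖ ^ 2) (h₂ : ‖w - y₂‖ ^ 2 = c + ‖z - x₂‖ ^ 2) :
    c + ⟪z - x₁, z - x₂⟫ ≤ ⟪w - y₁, w - y₂⟫ := by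
  have hy : ‖y₁ - y₂‖ ^ 2 = ‖w - y₁‖ ^ 2 - 2 * ⟪w - y₁, w - y₂⟫ + ‖w - y₂‖ ^ 2 := by
    rw [← norm_sub_sq_real, norm_sub_rev, sub_sub_sub_cancel_left]
  have hx : ‖x₁ - x₂‖ ^ 2 = ‖z - x₁‖ ^ 2 - 2 * ⟪z - x₁, z - x₂⟫ + ‖z - x₂‖ ^ 2 := by
    rw [← norm_sub_sq_real, norm_sub_rev, sub_sub_sub_cancel_left]
  linarith [pow_le_pow_left₀ (norm_nonneg _) h 2]

theorem nonpos_of_norm_sum_smul_sub_sq_eq {κ : Type*} [Fintype κ] {μ : κ → ℝ}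
    (hμ₀ : ∀ k, 0 ≤ μ k) (hμ₁ : ∑ k, μ k = 1) {x y : κ → E}
    (hxy : ∀ k l, ‖y k - y l‖ ≤ ‖x k - x l‖) {z : E} {c : ℝ}
    (hc : ∀ k, ‖∑ l, μ l • y l - y k‖ ^ 2 = c + ‖z - x k‖ ^ 2) : c ≤ 0 := by
  set w := ∑ l, μ l • y l
  have hw : ∑ k, μ k • (w - y k) = 0 := by
    simp only [smul_sub, Finset.sum_sub_distrib, ← Finset.sum_smul, hμ₁, one_smul, w, sub_self]
  have hcc : ∑ k, ∑ l, μ k * μ l * c = c := by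
    simp only [← Finset.sum_mul, ← Finset.mul_sum, hμ₁, mul_one, one_mul]
  have key : c + ‖∑ k, μ k • (z - x k)‖ ^ 2 ≤ ‖∑ k, μ k • (w - y k)‖ ^ 2 := by
    rw [norm_sum_smul_sq, norm_sum_smul_sq, ← hcc, ← Finset.sum_add_distrib]
    refine Finset.sum_le_sum fun k _ => ?_
    rw [← Finset.sum_add_distrib]
    refine Finset.sum_le_sum fun l _ => ?_
    rw [← mul_add]
    exact mul_le_mul_of_nonneg_left (add_inner_le_inner_of_norm_sub_le (hxy k l) (hc k) (hc l))
      (mul_nonneg (hμ₀ k) (hμ₀ l))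
  rw [hw, norm_zero] at key
  nlinarith [sq_nonneg ‖∑ k, μ k • (z - x k)‖]

theorem mem_convexHull_of_isMinOn_sup' [CompleteSpace E] {ι : Type*} {s : Finset ι}
    (hs : s.Nonempty) (y : ι → E) (r : ι → ℝ) {w : E}
    (hw : IsMinOn (fun v => s.sup' hs fun i => ‖v - y i‖ ^ 2 - r i) univ w) :
    w ∈ convexHull ℝ
      (y '' {i | i ∈ s ∧ ‖w - y i‖ ^ 2 - r i = s.sup' hs fun i => ‖w - y i‖ ^ 2 - r i}) := by
  set c := s.sup' hs fun i => ‖w - y i‖ ^ 2 - r i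
  by_contra hw'
  have hfin : (y '' {i | i ∈ s ∧ ‖w - y i‖ ^ 2 - r i = c}).Finite :=
    (s.finite_toSet.subset fun i hi => hi.1).image y
  obtain ⟨v, hv⟩ := exists_forall_inner_sub_neg (convex_convexHull ℝ _)
    (hfin.isCompact_convexHull (𝕜 := ℝ)).isClosed hw'
  -- moving from `w` along `v` lowers the active terms and keeps the others below `c`
  have hdrop : ∀ i ∈ s, ∀ᶠ t in 𝓝[>] (0 : ℝ), ‖w + t • v - y i‖ ^ 2 - r i < c := by
    intro i hi
    by_cases hact : ‖w - y i‖ ^ 2 - r i = c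
    · have hneg : 2 * ⟪w - y i, v⟫ + 0 * ‖v‖ ^ 2 < 0 := by
        have := hv (y i) (subset_convexHull ℝ _ ⟨i, ⟨hi, hact⟩, rfl⟩)
        linarith
      have hslope : ∀ᶠ t in 𝓝 (0 : ℝ), 2 * ⟪w - y i, v⟫ + t * ‖v‖ ^ 2 < 0 :=
        (continuous_const.add (continuous_id.mul continuous_const)).continuousAt.eventually_lt
          continuousAt_const hneg
      filter_upwards [nhdsWithin_le_nhds hslope, self_mem_nhdsWithin] with t hslope ht
      rw [norm_add_smul_sub_sq]
      nlinarith [mul_neg_of_pos_of_neg (show (0 : ℝ) < t from ht) hslope]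
    · have hlt : ‖w + (0 : ℝ) • v - y i‖ ^ 2 - r i < c := by
        rw [zero_smul, add_zero]
        exact lt_of_le_of_ne (Finset.le_sup' (fun i => ‖w - y i‖ ^ 2 - r i) hi) hact
      have hcont : Continuous fun t : ℝ => ‖w + t • v - y i‖ ^ 2 - r i := by fun_prop
      exact nhdsWithin_le_nhds (hcont.continuousAt.eventually_lt continuousAt_const hlt)
  obtain ⟨t, ht⟩ := ((Filter.eventually_all_finset s).2 hdrop).exists
  exact (hw (mem_univ (w + t • v))).not_gt ((Finset.sup'_lt_iff hs).2 ht)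

theorem exists_forall_norm_sub_le_of_finset [FiniteDimensional ℝ E] {ι : Type*} (s : Finset ι)
    {x y : ι → E} (hxy : ∀ i ∈ s, ∀ j ∈ s, ‖y i - y j‖ ≤ ‖x i - x j‖) (z : E) :
    ∃ w, ∀ i ∈ s, ‖w - y i‖ ≤ ‖z - x i‖ := by
  rcases s.eq_empty_or_nonempty with rfl | hs
  · exact ⟨0, by simp⟩
  set g : E → ℝ := fun v => s.sup' hs fun i => ‖v - y i‖ ^ 2 - ‖z - x i‖ ^ 2
  have hg : Tendsto g (cocompact E) atTop := by
    obtain ⟨i₀, hi₀⟩ := hs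
    have hdist : Tendsto (fun v : E => ‖v - y i₀‖) (cocompact E) atTop :=
      tendsto_norm_cocompact_atTop.comp
        (Homeomorph.subRight (y i₀)).isClosedEmbedding.tendsto_cocompact
    exact tendsto_atTop_mono (fun v => Finset.le_sup' (fun i => ‖v - y i‖ ^ 2 - ‖z - x i‖ ^ 2) hi₀)
      (tendsto_atTop_add_const_right _ _ ((tendsto_pow_atTop two_ne_zero).comp hdist))
  obtain ⟨w, hw⟩ := (show Continuous g by fun_prop).exists_forall_le hg
  suffices hc : g w ≤ 0 by
    refine ⟨w, fun i hi => ?_⟩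
    have := (Finset.le_sup' (fun i => ‖w - y i‖ ^ 2 - ‖z - x i‖ ^ 2) hi).trans hc
    exact pow_le_pow_iff_left₀ (norm_nonneg _) (norm_nonneg _) two_ne_zero |>.1 (by linarith)
  obtain ⟨κ, _, μ, u, hμ₀, hμ₁, hu, hμu⟩ := mem_convexHull_iff_exists_fintype.1
    (mem_convexHull_of_isMinOn_sup' hs y (fun i => ‖z - x i‖ ^ 2) fun v _ => hw v)
  choose k hk hyk using hu
  refine nonpos_of_norm_sum_smul_sub_sq_eq hμ₀ hμ₁ (x := x ∘ k) (y := y ∘ k)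
    (fun l m => hxy _ (hk l).1 _ (hk m).1) (z := z) fun l => ?_
  have hact := (hk l).2
  simp only [Function.comp_apply, hyk, hμu] at hact ⊢
  linarith

theorem exists_forall_norm_sub_le [FiniteDimensional ℝ E] {ι : Type*} {x y : ι → E}
    (hxy : ∀ i j, ‖y i - y j‖ ≤ ‖x i - x j‖) (z : E) : ∃ w, ∀ i, ‖w - y i‖ ≤ ‖z - x i‖ := by
  classical
  rcases isEmpty_or_nonempty ι with hι | ⟨⟨i₀⟩⟩
  · exact ⟨0, isEmptyElim⟩
  have hball : ∀ i, ∀ w, w ∈ Metric.closedBall (y i) ‖z - x i‖ ↔ ‖w - y i‖ ≤ ‖z - x i‖ :=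
    fun i w => by rw [Metric.mem_closedBall, dist_eq_norm]
  have hfin : ∀ u : Finset ι, (Metric.closedBall (y i₀) ‖z - x i₀‖ ∩
      ⋂ i ∈ u, Metric.closedBall (y i) ‖z - x i‖).Nonempty := by
    intro u
    obtain ⟨w, hw⟩ := exists_forall_norm_sub_le_of_finset (insert i₀ u)
      (fun i _ j _ => hxy i j) z
    refine ⟨w, (hball _ _).2 (hw _ (u.mem_insert_self i₀)), mem_iInter₂.2 fun i hi => ?_⟩
    exact (hball _ _).2 (hw _ (Finset.mem_insert_of_mem hi))
  obtain ⟨w, -, hw⟩ := (isCompact_closedBall _ _).inter_iInter_nonempty _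
    (fun i => Metric.isClosed_closedBall) hfin
  exact ⟨w, fun i => (hball _ _).1 (mem_iInter.1 hw i)⟩

def IsMonotoneOperator (A : E → Set E) : Prop :=
  ∀ x₁ y₁ x₂ y₂, y₁ ∈ A x₁ → y₂ ∈ A x₂ → 0 ≤ ⟪x₁ - x₂, y₁ - y₂⟫

def IsMaximalMonotoneOperator (A : E → Set E) : Prop :=
  IsMonotoneOperator A ∧
    ∀ x₁ y₁, (∀ x₂ y₂, y₂ ∈ A x₂ → 0 ≤ ⟪x₁ - x₂, y₁ - y₂⟫) → y₁ ∈ A x₁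

theorem IsMonotoneOperator.inner_le {A : E → Set E} (hA : IsMonotoneOperator A) {x y a b : E}
    (hy : y ∈ A x) (hb : b ∈ A a) : ⟪a - x, y⟫ ≤ ⟪a - x, b⟫ := by
  have := hA a b x y hb hy
  rw [inner_sub_right] at this
  linarith

theorem IsMaximalMonotoneOperator.exists_add_smul_eq [FiniteDimensional ℝ E] {A : E → Set E}
    (hA : IsMaximalMonotoneOperator A) {l : ℝ} (hl : 0 < l) (z : E) :
    ∃ x, ∃ y ∈ A x, x + l • y = z := by
  let G := {p : E × E // p.2 ∈ A p.1}
  have hcayley : ∀ p q : G, ‖(p.1.1 - l • p.1.2) - (q.1.1 - l • q.1.2)‖ ≤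
      ‖(p.1.1 + l • p.1.2) - (q.1.1 + l • q.1.2)‖ := by
    intro p q
    have hmono := hA.1 _ _ _ _ p.2 q.2
    refine pow_le_pow_iff_left₀ (norm_nonneg _) (norm_nonneg _) two_ne_zero |>.1 ?_
    rw [sub_sub_sub_comm, add_sub_add_comm, ← smul_sub, norm_add_sq_real, norm_sub_sq_real,
      real_inner_smul_right]
    nlinarith
  obtain ⟨w, hw⟩ := exists_forall_norm_sub_le hcayley z
  have hl₂ : (1 / (2 * l)) * (2 * l) = 1 := one_div_mul_cancel (by positivity)
  -- `(z, w) = (x + l • y, x - l • y)` solved for `(x, y)`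
  refine ⟨(1 / 2 : ℝ) • (z + w), (1 / (2 * l)) • (z - w), hA.2 _ _ fun a b hb => ?_, ?_⟩
  · set U := z - (a + l • b)
    set V := w - (a - l • b)
    have hx : (1 / 2 : ℝ) • (z + w) - a = (1 / 2 : ℝ) • (U + V) := by module
    have hy : (1 / (2 * l)) • (z - w) - b = (1 / (2 * l)) • (U - V) := by
      rw [show U - V = (z - w) - (2 * l) • b by module, smul_sub _ (z - w), smul_smul, hl₂,
        one_smul]
    rw [hx, hy, real_inner_smul_left, real_inner_smul_right,
      real_inner_add_sub_eq_norm_sq_sub_norm_sq]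
    have hVU : ‖V‖ ^ 2 ≤ ‖U‖ ^ 2 := pow_le_pow_left₀ (norm_nonneg _) (hw ⟨(a, b), hb⟩) 2
    have : 0 ≤ 1 / (2 * l) := by positivity
    nlinarith
  · rw [smul_smul, show l * (1 / (2 * l)) = 1 / 2 by field_simp]
    module

theorem IsMonotoneOperator.norm_sub_sq_le {A : E → Set E} (hA : IsMonotoneOperator A)
    {a b wa wb x y z : E} {s t l : ℝ} (ha : wa ∈ A a) (hb : wb ∈ A b) (hy : y ∈ A x)
    (hs : 0 ≤ s) (ht : 0 ≤ t) (hst : s + t = 1) (hz : s • a + t • b = z)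
    (hl : 0 ≤ l) (hxy : x + l • y = z) :
    ‖z - x‖ ^ 2 ≤ l * (‖wa‖ + ‖wb‖) * (‖z - a‖ + ‖z - b‖ + ‖z - x‖) := by
  have hbound : ∀ {c w : E}, w ∈ A c → ⟪c - x, y⟫ ≤ (‖z - c‖ + ‖z - x‖) * ‖w‖ := by
    intro c w hw
    calc ⟪c - x, y⟫ ≤ ⟪c - x, w⟫ := hA.inner_le hy hw
      _ ≤ ‖c - x‖ * ‖w‖ := real_inner_le_norm _ _
      _ ≤ (‖z - c‖ + ‖z - x‖) * ‖w‖ := by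
        gcongr
        rw [← sub_sub_sub_cancel_left x c z, add_comm]
        exact norm_sub_le _ _
  have hzx : z - x = s • (a - x) + t • (b - x) := by
    have hx : x = s • x + t • x := by rw [← add_smul, hst, one_smul]
    rw [← hz]
    nth_rw 1 [hx]
    module
  calc ‖z - x‖ ^ 2 = l * (s * ⟪a - x, y⟫ + t * ⟪b - x, y⟫) := by
        rw [← real_inner_self_eq_norm_sq]
        nth_rw 2 [← hxy]
        rw [add_sub_cancel_left, real_inner_smul_right, hzx, inner_add_left,
          real_inner_smul_left, real_inner_smul_left]
    _ ≤ l * (s * ((‖z - a‖ + ‖z - x‖) * ‖wa‖) + t * ((‖z - b‖ + ‖z - x‖) * ‖wb‖)) := by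
        gcongr
        exacts [hbound ha, hbound hb]
    _ ≤ l * (‖wa‖ + ‖wb‖) * (‖z - a‖ + ‖z - b‖ + ‖z - x‖) := by
        rw [mul_assoc]
        gcongr
        have hsa : s * ((‖z - a‖ + ‖z - x‖) * ‖wa‖) ≤ (‖z - a‖ + ‖z - x‖) * ‖wa‖ :=
          mul_le_of_le_one_left (by positivity) (by linarith)
        have htb : t * ((‖z - b‖ + ‖z - x‖) * ‖wb‖) ≤ (‖z - b‖ + ‖z - x‖) * ‖wb‖ :=
          mul_le_of_le_one_left (by positivity) (by linarith)
        nlinarith [mul_nonneg (norm_nonneg (z - b)) (norm_nonneg wa),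
          mul_nonneg (norm_nonneg (z - a)) (norm_nonneg wb)]

theorem IsMaximalMonotoneOperator.add_smul_mem_closure [FiniteDimensional ℝ E]
    {A : E → Set E} (hA : IsMaximalMonotoneOperator A) {a b : E} (ha : (A a).Nonempty)
    (hb : (A b).Nonempty) {s t : ℝ} (hs : 0 ≤ s) (ht : 0 ≤ t) (hst : s + t = 1) :
    s • a + t • b ∈ closure {x | (A x).Nonempty} := by
  obtain ⟨wa, hwa⟩ := ha
  obtain ⟨wb, hwb⟩ := hb
  set z := s • a + t • b
  set W := ‖wa‖ + ‖wb‖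
  set M := ‖z - a‖ + ‖z - b‖
  have hsmall : Tendsto (fun l => l * W + √(l * W * M)) (𝓝[>] 0) (𝓝 0) := by
    have : Continuous fun l : ℝ => l * W + √(l * W * M) := by fun_prop
    simpa using (this.tendsto 0).mono_left nhdsWithin_le_nhds
  rw [Metric.mem_closure_iff]
  intro ε hε
  obtain ⟨l, hlε, hl⟩ := ((hsmall.eventually (gt_mem_nhds hε)).and self_mem_nhdsWithin).exists
  obtain ⟨x, y, hy, hxy⟩ := hA.exists_add_smul_eq hl z
  refine ⟨x, ⟨y, hy⟩, ?_⟩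
  have := le_add_sqrt_of_sq_le (by positivity)
    (hA.1.norm_sub_sq_le hwa hwb hy hs ht hst rfl (le_of_lt hl) hxy)
  rw [dist_eq_norm]
  exact this.trans_lt hlε

theorem convex_closure_of_forall_add_smul_mem_closure {𝕜 F : Type*} [Semiring 𝕜] [PartialOrder 𝕜]
    [AddCommMonoid F] [Module 𝕜 F] [TopologicalSpace F] [ContinuousAdd F]
    [ContinuousConstSMul 𝕜 F] {S : Set F}
    (h : ∀ a ∈ S, ∀ b ∈ S, ∀ s t : 𝕜, 0 ≤ s → 0 ≤ t → s + t = 1 → s • a + t • b ∈ closure S) :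
    Convex 𝕜 (closure S) := by
  intro p hp q hq s t hs ht hst
  simpa only [closure_closure] using map_mem_closure₂' (u := closure S) (by fun_prop) (by fun_prop)
    hp hq fun a ha b hb => h a ha b hb s t hs ht hst

/-- If `A : ℝⁿ → 2^{ℝⁿ}` is a maximal monotone operator, then the closure of its domain
`D(A) = {x : A(x) ≠ ∅}` is a convex subset of `ℝⁿ`. -/
theorem maximal_monotone_closure_domain_convex (n : ℕ)
    (A : EuclideanSpace ℝ (Fin n) → Set (EuclideanSpace ℝ (Fin n)))
    (hmono : ∀ x₁ y₁ x₂ y₂ : EuclideanSpace ℝ (Fin n), y₁ ∈ A x₁ → y₂ ∈ A x₂ →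
      0 ≤ (inner ℝ (x₁ - x₂) (y₁ - y₂) : ℝ))
    (hmax : ∀ x₁ y₁ : EuclideanSpace ℝ (Fin n),
      (∀ x₂ y₂ : EuclideanSpace ℝ (Fin n), y₂ ∈ A x₂ →
        0 ≤ (inner ℝ (x₁ - x₂) (y₁ - y₂) : ℝ)) → y₁ ∈ A x₁) :
    Convex ℝ (closure {x | (A x).Nonempty}) :=
  convex_closure_of_forall_add_smul_mem_closure fun _ ha _ hb _ _ hs ht hst =>
    IsMaximalMonotoneOperator.add_smul_mem_closure ⟨hmono, hmax⟩ ha hb hs ht hst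
end
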